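/- The family of linear maps f_t on ℝ² defined by f_t(e₁) = t·e₁, f_t(e₂) = ½(e₁ + e₂) (t ≠ 0) contracts ψ₀ onto an algebra isomorphic to ψ₂: the limit as t → 0 of f_t⁻¹(ψ₀(f_t(x), f_t(y))) exists for all x, y, and the resulting product is isomorphic to the product with e₁∘e₁ = 0, e₂∘e₂ = e₂, e₁∘e₂ = 0. -/
import Mathlib


open Filter Topology

/-- ψ₀ : e₁∘e₁ = e₁, e₂∘e₂ = e₁, e₁∘e₂ = e₂. -/
def psi0 (x y : ℝ × ℝ) : ℝ × ℝ := (x.1 * y.1 + x.2 * y.2, x.1 * y.2 + x.2 * y.1)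

/-- ψ₂ : e₁∘e₁ = 0, e₂∘e₂ = e₂, e₁∘e₂ = 0. -/
def psi2 (x y : ℝ × ℝ) : ℝ × ℝ := (0, x.2 * y.2)

/-- f_t(e₁) = t·e₁, f_t(e₂) = ½(e₁ + e₂). -/
noncomputable def ft (t : ℝ) (x : ℝ × ℝ) : ℝ × ℝ := (t * x.1 + x.2 / 2, x.2 / 2)

/-- The inverse of f_t. -/
noncomputable def ftInv (t : ℝ) (u : ℝ × ℝ) : ℝ × ℝ := ((u.1 - u.2) / t, 2 * u.2)

theorem stmt_15 :
    ∃ φ' : ℝ × ℝ → ℝ × ℝ → ℝ × ℝ,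
      (∀ x y : ℝ × ℝ,
        Tendsto (fun t : ℝ => ftInv t (psi0 (ft t x) (ft t y)))
          (𝓝[≠] 0) (𝓝 (φ' x y))) ∧
      ∃ g : (ℝ × ℝ) ≃ₗ[ℝ] (ℝ × ℝ), ∀ x y, g (φ' x y) = psi2 (g x) (g y) := by
  refine ⟨psi2, fun x y => ?_, LinearEquiv.refl ℝ _, fun x y => rfl⟩
  have heq : ∀ᶠ t in 𝓝[≠] (0:ℝ),
      ftInv t (psi0 (ft t x) (ft t y)) =
        (t * (x.1 * y.1), t * (x.1 * y.2 + x.2 * y.1) + x.2 * y.2) := by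
    filter_upwards [self_mem_nhdsWithin] with t ht
    have ht : t ≠ 0 := ht
    simp only [ftInv, psi0, ft, Prod.mk.injEq]
    constructor
    · field_simp; ring
    · ring
  refine Tendsto.congr' (heq.mono fun t h => h.symm) ?_
  have h1 : Tendsto (fun t : ℝ => (t * (x.1 * y.1),
      t * (x.1 * y.2 + x.2 * y.1) + x.2 * y.2)) (𝓝 0) (𝓝 (psi2 x y)) := by
    have : psi2 x y = ((0:ℝ) * (x.1 * y.1), (0:ℝ) * (x.1 * y.2 + x.2 * y.1) + x.2 * y.2) := by
      simp [psi2]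
    rw [this]
    exact ((continuous_id.mul continuous_const).prodMk
      ((continuous_id.mul continuous_const).add continuous_const)).tendsto 0
  exact h1.mono_left nhdsWithin_le_nhds
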